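/- arXiv:2202.06708 — 2 statements merged into one kernel-verified Lean document; each statement's English description precedes it below -/
import Mathlib

section
/- Let G be a simple graph with vertex set partitioned into nonempty bags {B_x : x ∈ V(H)} indexed by a trigraph H = (V, E_H, R_H) such that: for every black edge {x,y} ∈ E_H all pairs between B_x and B_y are adjacent in G, and for non-adjacent x,y no pairs are adjacent. Let n(x)=|B_x|, m(x) = number of G-edges inside B_x, e(x,y) = number of G-edges between B_x and B_y, and let t be the number of triangles of G having at least two vertices in some single bag B_x with the third in a red-neighboring or same bag, or having all three vertices in three bags spanned by at least two red edges. Then the total number of triangles of G equals t + Σ_{black triangles {x,y,z} in H} n(x)n(y)n(z) + Σ_{x,y,z: {x,z}∈R_H, {x,y},{y,z}∈E_H} e(x,z)·n(y) + Σ_{{x,y}∈E_H} (n(x)·m(y) + m(x)·n(y)). -/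
attribute [local instance] Classical.propDecidable

/-- The number of edges of `G` with both endpoints in the vertex set `p`. -/
noncomputable def edgesInside {V : Type*} [Fintype V] (G : SimpleGraph V) (p : Finset V) : ℕ :=
  (Finset.univ.filter fun e : Sym2 V => e ∈ G.edgeSet ∧ ∀ a ∈ e, a ∈ p).card

/-- The number of edges of `G` with one endpoint in `p` and the other in `q`. -/
noncomputable def edgesBetween {V : Type*} [Fintype V] (G : SimpleGraph V)
    (p q : Finset V) : ℕ :=
  (Finset.univ.filter fun e : Sym2 V =>
    ∃ a b, e = s(a, b) ∧ G.Adj a b ∧ a ∈ p ∧ b ∈ q).card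

/-- A triangle of `G` is *starred* (w.r.t. a trigraph `H = (W, E_H, R_H)` with bags `B`) if it
has at least two vertices in a single bag with the third vertex in the same bag or in a bag
joined to it by a red edge, or if its three vertices lie in three distinct bags spanned by at
least two red edges. -/
def StarTriangle {V W : Type*} (RH : SimpleGraph W) (B : W → Finset V)
    (t : Finset V) : Prop :=
  (∃ x, ∃ a ∈ t, ∃ b ∈ t, a ≠ b ∧ a ∈ B x ∧ b ∈ B x ∧
    ∀ c ∈ t, c ≠ a → c ≠ b → (c ∈ B x ∨ ∃ y, RH.Adj x y ∧ c ∈ B y)) ∨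
  (∃ x y z, x ≠ y ∧ y ≠ z ∧ x ≠ z ∧
    (∃ a ∈ t, a ∈ B x) ∧ (∃ b ∈ t, b ∈ B y) ∧ (∃ c ∈ t, c ∈ B z) ∧
    ((RH.Adj x y ∧ RH.Adj y z) ∨ (RH.Adj x y ∧ RH.Adj x z) ∨ (RH.Adj y z ∧ RH.Adj x z)))

section Aux

open Finset SimpleGraph

variable {V W : Type*} [Fintype V] [Fintype W] [LinearOrder W]
  {G : SimpleGraph V} {EH RH : SimpleGraph W} {B : W → Finset V} {bag : V → W}

noncomputable def pairF {V : Type*} : Sym2 V → Finset V :=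
  Sym2.lift ⟨fun a b => {a, b}, fun a b => Finset.pair_comm a b⟩

@[simp] lemma pairF_mk {V : Type*} (a b : V) : pairF s(a, b) = ({a, b} : Finset V) := rfl

lemma card_triple {α : Type*} [DecidableEq α] {x y z : α} (hxy : x ≠ y) (hxz : x ≠ z)
    (hyz : y ≠ z) : ({x, y, z} : Finset α).card = 3 := by
  rw [Finset.card_insert_of_notMem (by simp [hxy, hxz]), Finset.card_pair hyz]

lemma tri_eq {α : Type*} [DecidableEq α] {t : Finset α} {a b c : α} (ha : a ∈ t) (hb : b ∈ t)
    (hc : c ∈ t) (hab : a ≠ b) (hac : a ≠ c) (hbc : b ≠ c) (hcard : t.card = 3) :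
    t = {a, b, c} := by
  refine (Finset.eq_of_subset_of_card_le ?_ ?_).symm
  · simp only [Finset.insert_subset_iff, Finset.singleton_subset_iff]
    exact ⟨ha, hb, hc⟩
  · rw [hcard, card_triple hab hac hbc]

lemma memB (hmem : ∀ a, a ∈ B (bag a)) (huniq : ∀ a x, a ∈ B x → x = bag a)
    {a : V} {x : W} : a ∈ B x ↔ bag a = x :=
  ⟨fun h => (huniq a x h).symm, fun h => h ▸ hmem a⟩

lemma countFiber3
    (hmem : ∀ a, a ∈ B (bag a)) (huniq : ∀ a x, a ∈ B x → x = bag a)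
    (hblack : ∀ x y : W, EH.Adj x y → ∀ a ∈ B x, ∀ b ∈ B y, G.Adj a b)
    {x y z : W} (hxy : EH.Adj x y) (hxz : EH.Adj x z) (hyz : EH.Adj y z) :
    ((G.cliqueFinset 3).filter fun t => t.image bag = {x, y, z}).card
      = (B x).card * ((B y).card * (B z).card) := by
  have hb : ∀ {a : V} {w : W}, a ∈ B w ↔ bag a = w := fun {a w} => memB hmem huniq
  rw [← Finset.card_product, ← Finset.card_product]
  refine (Finset.card_bij (fun p _ => ({p.1, p.2.1, p.2.2} : Finset V)) ?_ ?_ ?_).symm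
  · rintro ⟨a, b, c⟩ hp
    simp only [Finset.mem_product] at hp
    obtain ⟨ha, hb', hc⟩ := hp
    have hba : bag a = x := hb.mp ha
    have hbb : bag b = y := hb.mp hb'
    have hbc : bag c = z := hb.mp hc
    refine Finset.mem_filter.mpr ⟨?_, ?_⟩
    · exact SimpleGraph.mem_cliqueFinset_iff.mpr (SimpleGraph.is3Clique_triple_iff.mpr
        ⟨hblack x y hxy a ha b hb', hblack x z hxz a ha c hc, hblack y z hyz b hb' c hc⟩)
    · simp [Finset.image_insert, hba, hbb, hbc]
  · rintro ⟨a, b, c⟩ hp ⟨a', b', c'⟩ hp' h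
    have h2 : ({a, b, c} : Finset V) = {a', b', c'} := h
    simp only [Finset.mem_product] at hp hp'
    have hba : bag a = x := hb.mp hp.1
    have hbb : bag b = y := hb.mp hp.2.1
    have hbc : bag c = z := hb.mp hp.2.2
    have hba' : bag a' = x := hb.mp hp'.1
    have hbb' : bag b' = y := hb.mp hp'.2.1
    have hbc' : bag c' = z := hb.mp hp'.2.2
    have ea : a' = a := by
      have h1 : a' ∈ ({a, b, c} : Finset V) := by rw [h2]; simp
      simp only [Finset.mem_insert, Finset.mem_singleton] at h1
      rcases h1 with h1 | h1 | h1
      · exact h1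
      · exact absurd (by rw [← hba', h1, hbb]) hxy.ne
      · exact absurd (by rw [← hba', h1, hbc]) hxz.ne
    have eb : b' = b := by
      have h1 : b' ∈ ({a, b, c} : Finset V) := by rw [h2]; simp
      simp only [Finset.mem_insert, Finset.mem_singleton] at h1
      rcases h1 with h1 | h1 | h1
      · exact absurd (by rw [← hbb', h1, hba] : y = x) hxy.ne.symm
      · exact h1
      · exact absurd (by rw [← hbb', h1, hbc]) hyz.ne
    have ec : c' = c := by
      have h1 : c' ∈ ({a, b, c} : Finset V) := by rw [h2]; simp
      simp only [Finset.mem_insert, Finset.mem_singleton] at h1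
      rcases h1 with h1 | h1 | h1
      · exact absurd (by rw [← hbc', h1, hba] : z = x) hxz.ne.symm
      · exact absurd (by rw [← hbc', h1, hbb] : z = y) hyz.ne.symm
      · exact h1
    simp only [Prod.mk.injEq]
    exact ⟨ea.symm, eb.symm, ec.symm⟩
  · intro t ht
    obtain ⟨htc, himg⟩ := Finset.mem_filter.mp ht
    have hclique := SimpleGraph.mem_cliqueFinset_iff.mp htc
    have hcard : t.card = 3 := hclique.card_eq
    have hxm : x ∈ t.image bag := by rw [himg]; simp
    have hym : y ∈ t.image bag := by rw [himg]; simp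
    have hzm : z ∈ t.image bag := by rw [himg]; simp
    obtain ⟨a, ha, hba⟩ := Finset.mem_image.mp hxm
    obtain ⟨b, hb', hbb⟩ := Finset.mem_image.mp hym
    obtain ⟨c, hc, hbc⟩ := Finset.mem_image.mp hzm
    have hab : a ≠ b := fun hh => hxy.ne (by rw [← hba, hh, hbb])
    have hac : a ≠ c := fun hh => hxz.ne (by rw [← hba, hh, hbc])
    have hbc2 : b ≠ c := fun hh => hyz.ne (by rw [← hbb, hh, hbc])
    refine ⟨(a, b, c), ?_, (tri_eq ha hb' hc hab hac hbc2 hcard).symm⟩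
    simp only [Finset.mem_product]
    exact ⟨hb.mpr hba, hb.mpr hbb, hb.mpr hbc⟩

lemma countFiber2
    (hmem : ∀ a, a ∈ B (bag a)) (huniq : ∀ a x, a ∈ B x → x = bag a)
    (hblack : ∀ x y : W, EH.Adj x y → ∀ a ∈ B x, ∀ b ∈ B y, G.Adj a b)
    {x y z : W} (hxz : x ≠ z) (hxy : EH.Adj x y) (hyz : EH.Adj y z) :
    ((G.cliqueFinset 3).filter fun t => t.image bag = {x, y, z}).card
      = edgesBetween G (B x) (B z) * (B y).card := by
  have hb : ∀ {a : V} {w : W}, a ∈ B w ↔ bag a = w := fun {a w} => memB hmem huniq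
  rw [edgesBetween, ← Finset.card_product]
  refine (Finset.card_bij (fun p _ => insert p.2 (pairF p.1)) ?_ ?_ ?_).symm
  · rintro ⟨e, v⟩ hp
    simp only [Finset.mem_product, Finset.mem_filter, Finset.mem_univ, true_and] at hp
    obtain ⟨⟨a, c, rfl, hadj, ha, hc⟩, hv⟩ := hp
    have hba : bag a = x := hb.mp ha
    have hbc : bag c = z := hb.mp hc
    have hbv : bag v = y := hb.mp hv
    refine Finset.mem_filter.mpr ⟨?_, ?_⟩
    · refine SimpleGraph.mem_cliqueFinset_iff.mpr (SimpleGraph.is3Clique_triple_iff.mpr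
        ⟨(hblack x y hxy a ha v hv).symm, (hblack y z hyz v hv c hc), hadj⟩)
    · simp only [pairF_mk, Finset.image_insert, Finset.image_singleton, hba, hbc, hbv]
      ext u; simp only [Finset.mem_insert, Finset.mem_singleton]; tauto
  · rintro ⟨e, v⟩ hp ⟨e', v'⟩ hp' h
    simp only [Finset.mem_product, Finset.mem_filter, Finset.mem_univ, true_and] at hp hp'
    obtain ⟨⟨a, c, rfl, hadj, ha, hc⟩, hv⟩ := hp
    obtain ⟨⟨a', c', rfl, hadj', ha', hc'⟩, hv'⟩ := hp'
    have h2 : ({v, a, c} : Finset V) = {v', a', c'} := by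
      simpa only [pairF_mk] using h
    have hba : bag a = x := hb.mp ha
    have hbc : bag c = z := hb.mp hc
    have hbv : bag v = y := hb.mp hv
    have hba' : bag a' = x := hb.mp ha'
    have hbc' : bag c' = z := hb.mp hc'
    have hbv' : bag v' = y := hb.mp hv'
    have ev : v' = v := by
      have h1 : v' ∈ ({v, a, c} : Finset V) := by rw [h2]; simp
      simp only [Finset.mem_insert, Finset.mem_singleton] at h1
      rcases h1 with h1 | h1 | h1
      · exact h1
      · exact absurd (by rw [← hbv', h1, hba] : y = x) hxy.ne.symm
      · exact absurd (by rw [← hbv', h1, hbc]) hyz.ne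
    have ea : a' = a := by
      have h1 : a' ∈ ({v, a, c} : Finset V) := by rw [h2]; simp
      simp only [Finset.mem_insert, Finset.mem_singleton] at h1
      rcases h1 with h1 | h1 | h1
      · exact absurd (by rw [← hba', h1, hbv]) hxy.ne
      · exact h1
      · exact absurd (by rw [← hba', h1, hbc]) hxz
    have ec : c' = c := by
      have h1 : c' ∈ ({v, a, c} : Finset V) := by rw [h2]; simp
      simp only [Finset.mem_insert, Finset.mem_singleton] at h1
      rcases h1 with h1 | h1 | h1
      · exact absurd (by rw [← hbc', h1, hbv] : z = y) hyz.ne.symm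
      · exact absurd (by rw [← hbc', h1, hba] : z = x) (Ne.symm hxz)
      · exact h1
    simp only [Prod.mk.injEq]
    exact ⟨by rw [ea, ec], ev.symm⟩
  · intro t ht
    obtain ⟨htc, himg⟩ := Finset.mem_filter.mp ht
    have hclique := SimpleGraph.mem_cliqueFinset_iff.mp htc
    have hcard : t.card = 3 := hclique.card_eq
    have hxm : x ∈ t.image bag := by rw [himg]; simp
    have hym : y ∈ t.image bag := by rw [himg]; simp
    have hzm : z ∈ t.image bag := by rw [himg]; simp
    obtain ⟨a, ha, hba⟩ := Finset.mem_image.mp hxm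
    obtain ⟨v, hv, hbv⟩ := Finset.mem_image.mp hym
    obtain ⟨c, hc, hbc⟩ := Finset.mem_image.mp hzm
    have hav : a ≠ v := fun hh => hxy.ne (by rw [← hba, hh, hbv])
    have hac : a ≠ c := fun hh => hxz (by rw [← hba, hh, hbc])
    have hvc : v ≠ c := fun hh => hyz.ne (by rw [← hbv, hh, hbc])
    have hadj : G.Adj a c := hclique.isClique ha hc hac
    refine ⟨(s(a, c), v), ?_, ?_⟩
    · simp only [Finset.mem_product, Finset.mem_filter, Finset.mem_univ, true_and]
      exact ⟨⟨a, c, rfl, hadj, hb.mpr hba, hb.mpr hbc⟩, hb.mpr hbv⟩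
    · simp only [pairF_mk]
      rw [tri_eq hv ha hc (Ne.symm hav) hvc hac hcard]
lemma edgesInside_rep {y : W} {e : Sym2 V}
    (he : e ∈ G.edgeSet ∧ ∀ a ∈ e, a ∈ B y) :
    ∃ a b, e = s(a, b) ∧ G.Adj a b ∧ a ∈ B y ∧ b ∈ B y := by
  induction e using Sym2.ind with
  | _ a b => exact ⟨a, b, rfl, he.1, he.2 a (by simp), he.2 b (by simp)⟩

lemma countFiberPairPart
    (hmem : ∀ a, a ∈ B (bag a)) (huniq : ∀ a x, a ∈ B x → x = bag a)
    (hblack : ∀ x y : W, EH.Adj x y → ∀ a ∈ B x, ∀ b ∈ B y, G.Adj a b)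
    {x y : W} (hxy : EH.Adj x y) :
    ((G.cliqueFinset 3).filter fun t =>
        t.image bag = {x, y} ∧ (t.filter fun a => bag a = x).card = 1).card
      = (B x).card * edgesInside G (B y) := by
  have hb : ∀ {a : V} {w : W}, a ∈ B w ↔ bag a = w := fun {a w} => memB hmem huniq
  rw [edgesInside, ← Finset.card_product]
  refine (Finset.card_bij (fun p _ => insert p.1 (pairF p.2)) ?_ ?_ ?_).symm
  · rintro ⟨v, e⟩ hp
    simp only [Finset.mem_product, Finset.mem_filter, Finset.mem_univ, true_and] at hp
    obtain ⟨hv, he⟩ := hp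
    obtain ⟨a, c, rfl, hadj, ha, hc⟩ := edgesInside_rep he
    have hba : bag a = y := hb.mp ha
    have hbc : bag c = y := hb.mp hc
    have hbv : bag v = x := hb.mp hv
    have hva : v ≠ a := fun hh => hxy.ne (by rw [← hbv, hh, hba])
    have hvc : v ≠ c := fun hh => hxy.ne (by rw [← hbv, hh, hbc])
    refine Finset.mem_filter.mpr ⟨?_, ?_, ?_⟩
    · exact SimpleGraph.mem_cliqueFinset_iff.mpr (SimpleGraph.is3Clique_triple_iff.mpr
        ⟨hblack x y hxy v hv a ha, hblack x y hxy v hv c hc, hadj⟩)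
    · simp only [pairF_mk, Finset.image_insert, Finset.image_singleton, hba, hbc, hbv]
      ext u; simp only [Finset.mem_insert, Finset.mem_singleton]; tauto
    · show ((insert v (pairF s(a, c))).filter fun u => bag u = x).card = 1
      rw [pairF_mk]
      have : (insert v ({a, c} : Finset V)).filter (fun u => bag u = x) = {v} := by
        ext u
        simp only [Finset.mem_filter, Finset.mem_insert, Finset.mem_singleton]
        constructor
        · rintro ⟨h1 | h1 | h1, h2⟩
          · exact h1
          · exact absurd (by rw [← h2, h1, hba] : x = y) hxy.ne
          · exact absurd (by rw [← h2, h1, hbc] : x = y) hxy.ne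
        · rintro rfl; exact ⟨Or.inl rfl, hbv⟩
      rw [this, Finset.card_singleton]
  · rintro ⟨v, e⟩ hp ⟨v', e'⟩ hp' h
    simp only [Finset.mem_product, Finset.mem_filter, Finset.mem_univ, true_and] at hp hp'
    obtain ⟨hv, he⟩ := hp
    obtain ⟨hv', he'⟩ := hp'
    obtain ⟨a, c, rfl, hadj, ha, hc⟩ := edgesInside_rep he
    obtain ⟨a', c', rfl, hadj', ha', hc'⟩ := edgesInside_rep he'
    have h2 : ({v, a, c} : Finset V) = {v', a', c'} := by simpa only [pairF_mk] using h
    have hba : bag a = y := hb.mp ha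
    have hbc : bag c = y := hb.mp hc
    have hbv : bag v = x := hb.mp hv
    have hba' : bag a' = y := hb.mp ha'
    have hbc' : bag c' = y := hb.mp hc'
    have hbv' : bag v' = x := hb.mp hv'
    have ev : v' = v := by
      have h1 : v' ∈ ({v, a, c} : Finset V) := by rw [h2]; simp
      simp only [Finset.mem_insert, Finset.mem_singleton] at h1
      rcases h1 with h1 | h1 | h1
      · exact h1
      · exact absurd (by rw [← hbv', h1, hba] : x = y) hxy.ne
      · exact absurd (by rw [← hbv', h1, hbc] : x = y) hxy.ne
    have ea : a' = a ∨ a' = c := by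
      have h1 : a' ∈ ({v, a, c} : Finset V) := by rw [h2]; simp
      simp only [Finset.mem_insert, Finset.mem_singleton] at h1
      rcases h1 with h1 | h1 | h1
      · exact absurd (by rw [← hba', h1, hbv] : y = x) hxy.ne.symm
      · exact Or.inl h1
      · exact Or.inr h1
    have ec : c' = a ∨ c' = c := by
      have h1 : c' ∈ ({v, a, c} : Finset V) := by rw [h2]; simp
      simp only [Finset.mem_insert, Finset.mem_singleton] at h1
      rcases h1 with h1 | h1 | h1
      · exact absurd (by rw [← hbc', h1, hbv] : y = x) hxy.ne.symm
      · exact Or.inl h1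
      · exact Or.inr h1
    have hac' : a' ≠ c' := hadj'.ne
    simp only [Prod.mk.injEq]
    refine ⟨ev.symm, ?_⟩
    rcases ea with rfl | rfl <;> rcases ec with rfl | rfl
    · exact absurd rfl hac'
    · rfl
    · rw [Sym2.eq_swap]
    · exact absurd rfl hac'
  · intro t ht
    obtain ⟨htc, himg, hcnt⟩ := Finset.mem_filter.mp ht
    have hclique := SimpleGraph.mem_cliqueFinset_iff.mp htc
    have hcard : t.card = 3 := hclique.card_eq
    obtain ⟨v, hv⟩ := Finset.card_eq_one.mp hcnt
    have hvmem : v ∈ t ∧ bag v = x := by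
      have : v ∈ t.filter fun a => bag a = x := by rw [hv]; simp
      simpa using this
    obtain ⟨hvt, hbv⟩ := hvmem
    obtain ⟨p, q, r, hpq, hpr, hqr, hteq⟩ := Finset.card_eq_three.mp hcard
    have hbagmem : ∀ u ∈ t, bag u = x ∨ bag u = y := by
      intro u hu
      have : bag u ∈ t.image bag := Finset.mem_image_of_mem bag hu
      rw [himg] at this
      simpa using this
    have honep : ∀ u ∈ t, bag u = x → u = v := by
      intro u hu hux
      have : u ∈ t.filter fun a => bag a = x := Finset.mem_filter.mpr ⟨hu, hux⟩
      rw [hv] at this; simpa using this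
    -- find the two vertices with bag = y
    have key : ∃ a c, a ≠ c ∧ a ∈ t ∧ c ∈ t ∧ bag a = y ∧ bag c = y ∧ t = {v, a, c} := by
      have hpt : p ∈ t := by rw [hteq]; simp
      have hqt : q ∈ t := by rw [hteq]; simp
      have hrt : r ∈ t := by rw [hteq]; simp
      rcases hbagmem p hpt with hp1 | hp1 <;> rcases hbagmem q hqt with hq1 | hq1 <;>
        rcases hbagmem r hrt with hr1 | hr1
      · exact absurd ((honep p hpt hp1).trans (honep q hqt hq1).symm) hpq
      · exact absurd ((honep p hpt hp1).trans (honep q hqt hq1).symm) hpq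
      · exact absurd ((honep p hpt hp1).trans (honep r hrt hr1).symm) hpr
      · refine ⟨q, r, hqr, hqt, hrt, hq1, hr1, ?_⟩
        rw [hteq, honep p hpt hp1]
      · exact absurd ((honep q hqt hq1).trans (honep r hrt hr1).symm) hqr
      · refine ⟨p, r, hpr, hpt, hrt, hp1, hr1, ?_⟩
        rw [hteq, (honep q hqt hq1)]
        ext u; simp only [Finset.mem_insert, Finset.mem_singleton]; tauto
      · refine ⟨p, q, hpq, hpt, hqt, hp1, hq1, ?_⟩
        rw [hteq, (honep r hrt hr1)]
        ext u; simp only [Finset.mem_insert, Finset.mem_singleton]; tauto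
      · -- all bags y : contradicts x ∈ image
        exfalso
        have hxm : x ∈ t.image bag := by rw [himg]; simp
        obtain ⟨u, hu, hbu⟩ := Finset.mem_image.mp hxm
        have := hbagmem u hu
        have hu3 : u = p ∨ u = q ∨ u = r := by
          have := hu; rw [hteq] at this; simpa using this
        rcases hu3 with rfl | rfl | rfl
        · exact hxy.ne (by rw [← hbu, hp1])
        · exact hxy.ne (by rw [← hbu, hq1])
        · exact hxy.ne (by rw [← hbu, hr1])
    obtain ⟨a, c, hac, hat, hct, hbay, hbcy, hteq2⟩ := key
    have hadj : G.Adj a c := hclique.isClique hat hct hac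
    refine ⟨(v, s(a, c)), ?_, ?_⟩
    · simp only [Finset.mem_product, Finset.mem_filter, Finset.mem_univ, true_and]
      refine ⟨hb.mpr hbv, hadj, ?_⟩
      intro u hu
      rcases Sym2.mem_iff.mp hu with rfl | rfl
      · exact hb.mpr hbay
      · exact hb.mpr hbcy
    · simp only [pairF_mk]
      rw [hteq2]

lemma countFiberPair
    (hmem : ∀ a, a ∈ B (bag a)) (huniq : ∀ a x, a ∈ B x → x = bag a)
    (hblack : ∀ x y : W, EH.Adj x y → ∀ a ∈ B x, ∀ b ∈ B y, G.Adj a b)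
    {x y : W} (hxy : EH.Adj x y) :
    ((G.cliqueFinset 3).filter fun t => t.image bag = {x, y}).card
      = (B x).card * edgesInside G (B y) + edgesInside G (B x) * (B y).card := by
  have hb : ∀ {a : V} {w : W}, a ∈ B w ↔ bag a = w := fun {a w} => memB hmem huniq
  set F := (G.cliqueFinset 3).filter fun t => t.image bag = {x, y} with hF
  have hsplit := Finset.card_filter_add_card_filter_not
    (s := F) (p := fun t => (t.filter fun a => bag a = x).card = 1)
  have h1 : F.filter (fun t => (t.filter fun a => bag a = x).card = 1)
      = (G.cliqueFinset 3).filter fun t =>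
          t.image bag = {x, y} ∧ (t.filter fun a => bag a = x).card = 1 := by
    rw [hF, Finset.filter_filter]
  have hcnt3 : ∀ t ∈ F, (t.filter fun a => bag a = x).card + (t.filter fun a => bag a = y).card = 3
      ∧ 1 ≤ (t.filter fun a => bag a = x).card ∧ 1 ≤ (t.filter fun a => bag a = y).card := by
    intro t htF
    obtain ⟨htc, himg⟩ := Finset.mem_filter.mp htF
    have hclique := SimpleGraph.mem_cliqueFinset_iff.mp htc
    have hcard : t.card = 3 := hclique.card_eq
    constructor
    · have hcong : (t.filter fun a => bag a = y) = t.filter fun a => ¬ bag a = x := by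
        apply Finset.filter_congr
        intro u hu
        have hm : bag u ∈ t.image bag := Finset.mem_image_of_mem bag hu
        rw [himg] at hm
        simp only [Finset.mem_insert, Finset.mem_singleton] at hm
        constructor
        · intro h hx2; exact hxy.ne (by rw [← hx2, h])
        · intro h; tauto
      rw [hcong, ← hcard]
      exact Finset.card_filter_add_card_filter_not _
    · constructor
      · have hxm : x ∈ t.image bag := by rw [himg]; simp
        obtain ⟨u, hu, hbu⟩ := Finset.mem_image.mp hxm
        exact Finset.card_pos.mpr ⟨u, Finset.mem_filter.mpr ⟨hu, hbu⟩⟩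
      · have hym : y ∈ t.image bag := by rw [himg]; simp
        obtain ⟨u, hu, hbu⟩ := Finset.mem_image.mp hym
        exact Finset.card_pos.mpr ⟨u, Finset.mem_filter.mpr ⟨hu, hbu⟩⟩
  have h2 : F.filter (fun t => ¬ (t.filter fun a => bag a = x).card = 1)
      = (G.cliqueFinset 3).filter fun t =>
          t.image bag = {y, x} ∧ (t.filter fun a => bag a = y).card = 1 := by
    rw [hF, Finset.filter_filter]
    apply Finset.filter_congr
    intro t htc
    have hpair : ({y, x} : Finset W) = {x, y} := Finset.pair_comm y x
    constructor
    · rintro ⟨himg, hne1⟩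
      have hh := hcnt3 t (Finset.mem_filter.mpr ⟨htc, himg⟩)
      obtain ⟨hsum, hx1, hy1⟩ := hh
      refine ⟨by rw [hpair]; exact himg, by omega⟩
    · rintro ⟨himg, h1c⟩
      have himg' : t.image bag = {x, y} := by rw [← hpair]; exact himg
      have hh := hcnt3 t (Finset.mem_filter.mpr ⟨htc, himg'⟩)
      obtain ⟨hsum, hx1, hy1⟩ := hh
      exact ⟨himg', by omega⟩
  rw [← hsplit, h1, h2, countFiberPairPart hmem huniq hblack hxy,
    countFiberPairPart hmem huniq hblack hxy.symm]
  ring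

lemma red_pair_unique (hdisj : ∀ x y : W, ¬ (EH.Adj x y ∧ RH.Adj x y))
    {x y z u w : W} (hxy : EH.Adj x y) (hyz : EH.Adj y z)
    (hu : u ∈ ({x, y, z} : Finset W)) (hw : w ∈ ({x, y, z} : Finset W))
    (hr : RH.Adj u w) : (u = x ∧ w = z) ∨ (u = z ∧ w = x) := by
  simp only [Finset.mem_insert, Finset.mem_singleton] at hu hw
  rcases hu with rfl | rfl | rfl <;> rcases hw with rfl | rfl | rfl
  · exact absurd hr (RH.loopless.irrefl _)
  · exact absurd ⟨hxy, hr⟩ (hdisj _ _)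
  · exact Or.inl ⟨rfl, rfl⟩
  · exact absurd ⟨hxy, hr.symm⟩ (hdisj _ _)
  · exact absurd hr (RH.loopless.irrefl _)
  · exact absurd ⟨hyz, hr⟩ (hdisj _ _)
  · exact Or.inr ⟨rfl, rfl⟩
  · exact absurd ⟨hyz, hr.symm⟩ (hdisj _ _)
  · exact absurd hr (RH.loopless.irrefl _)

lemma notStar_of_blackTri
    (hmem : ∀ a, a ∈ B (bag a)) (huniq : ∀ a x, a ∈ B x → x = bag a)
    (hdisj : ∀ x y : W, ¬ (EH.Adj x y ∧ RH.Adj x y))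
    {t : Finset V} (ht : t ∈ G.cliqueFinset 3) (hs : t.image bag ∈ EH.cliqueFinset 3) :
    ¬ StarTriangle RH B t := by
  have hb : ∀ {a : V} {w : W}, a ∈ B w ↔ bag a = w := fun {a w} => memB hmem huniq
  have hcard : t.card = 3 := (SimpleGraph.mem_cliqueFinset_iff.mp ht).card_eq
  have hs' := SimpleGraph.mem_cliqueFinset_iff.mp hs
  have hinj : Set.InjOn bag t := Finset.card_image_iff.mp (by rw [hs'.card_eq, hcard])
  rintro (⟨x, a, ha, b, hbm, hab, haB, hbB, _⟩ |
    ⟨x, y, z, hxy, hyz, hxz, ⟨a, ha, haB⟩, ⟨b, hbm, hbB⟩, ⟨c, hc, hcB⟩, hred⟩)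
  · exact hab (hinj ha hbm (by rw [hb.mp haB, hb.mp hbB]))
  · have hxm : x ∈ t.image bag := by
      rw [← hb.mp haB]; exact Finset.mem_image_of_mem bag ha
    have hym : y ∈ t.image bag := by
      rw [← hb.mp hbB]; exact Finset.mem_image_of_mem bag hbm
    have hzm : z ∈ t.image bag := by
      rw [← hb.mp hcB]; exact Finset.mem_image_of_mem bag hc
    rcases hred with ⟨h1, _⟩ | ⟨h1, _⟩ | ⟨h1, _⟩
    · exact hdisj x y ⟨hs'.isClique (Finset.mem_coe.mpr hxm) (Finset.mem_coe.mpr hym) hxy, h1⟩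
    · exact hdisj x y ⟨hs'.isClique (Finset.mem_coe.mpr hxm) (Finset.mem_coe.mpr hym) hxy, h1⟩
    · exact hdisj y z ⟨hs'.isClique (Finset.mem_coe.mpr hym) (Finset.mem_coe.mpr hzm) hyz, h1⟩

lemma notStar_of_oneRed
    (hmem : ∀ a, a ∈ B (bag a)) (huniq : ∀ a x, a ∈ B x → x = bag a)
    (hdisj : ∀ x y : W, ¬ (EH.Adj x y ∧ RH.Adj x y))
    {t : Finset V} (ht : t ∈ G.cliqueFinset 3) {x y z : W}
    (himg : t.image bag = {x, y, z}) (hrz : RH.Adj x z) (hxy : EH.Adj x y)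
    (hyz : EH.Adj y z) : ¬ StarTriangle RH B t := by
  have hb : ∀ {a : V} {w : W}, a ∈ B w ↔ bag a = w := fun {a w} => memB hmem huniq
  have hxz : x ≠ z := hrz.ne
  have hcard : t.card = 3 := (SimpleGraph.mem_cliqueFinset_iff.mp ht).card_eq
  have hinj : Set.InjOn bag t := Finset.card_image_iff.mp
    (by rw [himg, card_triple hxy.ne hxz hyz.ne, hcard])
  rintro (⟨x0, a, ha, b, hbm, hab, haB, hbB, _⟩ |
    ⟨x', y', z', hxy', hyz', hxz', ⟨a, ha, haB⟩, ⟨b, hbm, hbB⟩, ⟨c, hc, hcB⟩, hred⟩)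
  · exact hab (hinj ha hbm (by rw [hb.mp haB, hb.mp hbB]))
  · have hxm : x' ∈ ({x, y, z} : Finset W) := by
      rw [← himg, ← hb.mp haB]; exact Finset.mem_image_of_mem bag ha
    have hym : y' ∈ ({x, y, z} : Finset W) := by
      rw [← himg, ← hb.mp hbB]; exact Finset.mem_image_of_mem bag hbm
    have hzm : z' ∈ ({x, y, z} : Finset W) := by
      rw [← himg, ← hb.mp hcB]; exact Finset.mem_image_of_mem bag hc
    rcases hred with ⟨h1, h2⟩ | ⟨h1, h2⟩ | ⟨h1, h2⟩
    · rcases red_pair_unique hdisj hxy hyz hxm hym h1 with ⟨e1, e2⟩ | ⟨e1, e2⟩ <;>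
        rcases red_pair_unique hdisj hxy hyz hym hzm h2 with ⟨e3, e4⟩ | ⟨e3, e4⟩
      · exact hxz (e3.symm.trans e2)
      · exact hxz' (e1.trans e4.symm)
      · exact hxz' (e1.trans e4.symm)
      · exact hxz (e2.symm.trans e3)
    · rcases red_pair_unique hdisj hxy hyz hxm hym h1 with ⟨e1, e2⟩ | ⟨e1, e2⟩ <;>
        rcases red_pair_unique hdisj hxy hyz hxm hzm h2 with ⟨e3, e4⟩ | ⟨e3, e4⟩
      · exact hyz' (e2.trans e4.symm)
      · exact hxz (e1.symm.trans e3)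
      · exact hxz (e3.symm.trans e1)
      · exact hyz' (e2.trans e4.symm)
    · rcases red_pair_unique hdisj hxy hyz hym hzm h1 with ⟨e1, e2⟩ | ⟨e1, e2⟩ <;>
        rcases red_pair_unique hdisj hxy hyz hxm hzm h2 with ⟨e3, e4⟩ | ⟨e3, e4⟩
      · exact hxy' (e3.trans e1.symm)
      · exact hxz (e4.symm.trans e2)
      · exact hxz (e2.symm.trans e4)
      · exact hxy' (e3.trans e1.symm)

lemma notStar_of_pair
    (hmem : ∀ a, a ∈ B (bag a)) (huniq : ∀ a x, a ∈ B x → x = bag a)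
    (hdisj : ∀ x y : W, ¬ (EH.Adj x y ∧ RH.Adj x y))
    {t : Finset V} (ht : t ∈ G.cliqueFinset 3) {x y : W}
    (himg : t.image bag = {x, y}) (hxy : EH.Adj x y) : ¬ StarTriangle RH B t := by
  have hb : ∀ {a : V} {w : W}, a ∈ B w ↔ bag a = w := fun {a w} => memB hmem huniq
  have hne : x ≠ y := hxy.ne
  have hcard : t.card = 3 := (SimpleGraph.mem_cliqueFinset_iff.mp ht).card_eq
  have hbagmem : ∀ u ∈ t, bag u = x ∨ bag u = y := by
    intro u hu
    have : bag u ∈ t.image bag := Finset.mem_image_of_mem bag hu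
    rw [himg] at this
    simpa using this
  rintro (⟨x0, a, ha, b, hbm, hab, haB, hbB, hcond⟩ |
    ⟨x', y', z', hxy', hyz', hxz', ⟨a, ha, haB⟩, ⟨b, hbm, hbB⟩, ⟨c, hc, hcB⟩, _⟩)
  · have hsub : ({a, b} : Finset V) ⊆ t := by
      simp only [Finset.insert_subset_iff, Finset.singleton_subset_iff]
      exact ⟨ha, hbm⟩
    have hpos : 0 < (t \ ({a, b} : Finset V)).card := by
      rw [Finset.card_sdiff_of_subset hsub, hcard, Finset.card_pair hab]
      omega
    obtain ⟨c, hcsd⟩ := Finset.card_pos.mp hpos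
    have hct : c ∈ t := (Finset.mem_sdiff.mp hcsd).1
    have hcn : c ∉ ({a, b} : Finset V) := (Finset.mem_sdiff.mp hcsd).2
    simp only [Finset.mem_insert, Finset.mem_singleton, not_or] at hcn
    obtain ⟨hca, hcb⟩ := hcn
    have hbx0a : bag a = x0 := hb.mp haB
    have hbx0b : bag b = x0 := hb.mp hbB
    have hcneq : bag c ≠ x0 := by
      intro hcc
      have ht3 : t = {a, b, c} := tri_eq ha hbm hct hab (Ne.symm hca) (Ne.symm hcb) hcard
      have hall : ∀ u ∈ t, bag u = x0 := by
        intro u hu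
        rw [ht3] at hu
        simp only [Finset.mem_insert, Finset.mem_singleton] at hu
        rcases hu with rfl | rfl | rfl <;> assumption
      have hxm : x ∈ t.image bag := by rw [himg]; simp
      have hym : y ∈ t.image bag := by rw [himg]; simp
      obtain ⟨u, hu, hbu⟩ := Finset.mem_image.mp hxm
      obtain ⟨w, hw, hbw⟩ := Finset.mem_image.mp hym
      exact hne (by rw [← hbu, hall u hu, ← hall w hw, hbw])
    rcases hcond c hct hca hcb with hcB2 | ⟨y0, hr, hcy0⟩
    · exact hcneq (hb.mp hcB2)
    · have hby0 : bag c = y0 := hb.mp hcy0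
      have hy0mem : y0 = x ∨ y0 = y := by
        have := hbagmem c hct; rw [hby0] at this; exact this
      have hx0mem : x0 = x ∨ x0 = y := by
        have := hbagmem a ha; rw [hbx0a] at this; exact this
      rcases hx0mem with rfl | rfl <;> rcases hy0mem with rfl | rfl
      · exact RH.loopless.irrefl _ hr
      · exact hdisj _ _ ⟨hxy, hr⟩
      · exact hdisj _ _ ⟨hxy, hr.symm⟩
      · exact RH.loopless.irrefl _ hr
  · have h1 := hbagmem a ha; rw [hb.mp haB] at h1
    have h2 := hbagmem b hbm; rw [hb.mp hbB] at h2
    have h3 := hbagmem c hc; rw [hb.mp hcB] at h3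
    rcases h1 with rfl | rfl <;> rcases h2 with rfl | rfl <;> rcases h3 with rfl | rfl <;>
      simp_all

set_option maxHeartbeats 1000000 in
lemma classify
    (hmem : ∀ a, a ∈ B (bag a)) (huniq : ∀ a x, a ∈ B x → x = bag a)
    (hdisj : ∀ x y : W, ¬ (EH.Adj x y ∧ RH.Adj x y))
    (hnone : ∀ x y : W, x ≠ y → ¬ EH.Adj x y → ¬ RH.Adj x y →
      ∀ a ∈ B x, ∀ b ∈ B y, ¬ G.Adj a b)
    {t : Finset V} (ht : t ∈ G.cliqueFinset 3) (hns : ¬ StarTriangle RH B t) :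
    (t.image bag ∈ EH.cliqueFinset 3)
    ∨ (∃ x y z, x < z ∧ RH.Adj x z ∧ EH.Adj x y ∧ EH.Adj y z ∧ t.image bag = {x, y, z})
    ∨ (∃ x y, x < y ∧ EH.Adj x y ∧ t.image bag = {x, y}) := by
  have hb : ∀ {a : V} {w : W}, a ∈ B w ↔ bag a = w := fun {a w} => memB hmem huniq
  have hclique := SimpleGraph.mem_cliqueFinset_iff.mp ht
  have hcard : t.card = 3 := hclique.card_eq
  obtain ⟨a, b, c, hab, hac, hbc, hteq⟩ := Finset.card_eq_three.mp hcard
  have hat : a ∈ t := by rw [hteq]; simp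
  have hbt : b ∈ t := by rw [hteq]; simp
  have hct : c ∈ t := by rw [hteq]; simp
  have hAab : G.Adj a b := hclique.isClique hat hbt hab
  have hAac : G.Adj a c := hclique.isClique hat hct hac
  have hAbc : G.Adj b c := hclique.isClique hbt hct hbc
  have himg : t.image bag = {bag a, bag b, bag c} := by
    rw [hteq]
    simp [Finset.image_insert]
  have hcol : ∀ {p q : V}, G.Adj p q → bag p ≠ bag q →
      EH.Adj (bag p) (bag q) ∨ RH.Adj (bag p) (bag q) := by
    intro p q hpq hne
    by_contra hcon
    push_neg at hcon
    exact hnone (bag p) (bag q) hne hcon.1 hcon.2 p (hmem p) q (hmem q) hpq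
  have star1 : ∀ {p q r : V}, t = {p, q, r} → p ≠ q → q ≠ r → p ≠ r → bag p = bag q →
      (bag r = bag p ∨ RH.Adj (bag p) (bag r)) → StarTriangle RH B t := by
    intro p q r hteq' hpq hqr hpr hbpq hopt
    left
    refine ⟨bag p, p, by rw [hteq']; simp, q, by rw [hteq']; simp, hpq, hmem p,
      by rw [hbpq]; exact hmem q, ?_⟩
    intro u hu hup huq
    have hur : u = r := by
      rw [hteq'] at hu
      simp only [Finset.mem_insert, Finset.mem_singleton] at hu
      tauto
    subst hur
    rcases hopt with heq | hr
    · exact Or.inl (by rw [← heq]; exact hmem u)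
    · exact Or.inr ⟨bag u, hr, hmem u⟩
  by_cases h1 : bag a = bag b
  · by_cases h2 : bag b = bag c
    · exact absurd (star1 hteq hab hbc hac h1 (Or.inl ((h1.trans h2).symm))) hns
    · have hne' : bag a ≠ bag c := by rw [h1]; exact h2
      rcases hcol hAac hne' with hE | hR
      · right; right
        have himg2 : t.image bag = {bag a, bag c} := by
          rw [himg, ← h1, Finset.insert_idem]
        rcases hne'.lt_or_gt with hlt | hlt
        · exact ⟨bag a, bag c, hlt, hE, himg2⟩
        · exact ⟨bag c, bag a, hlt, hE.symm, by rw [himg2, Finset.pair_comm]⟩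
      · exact absurd (star1 hteq hab hbc hac h1 (Or.inr hR)) hns
  · by_cases h2 : bag b = bag c
    · have hteq' : t = {b, c, a} := by
        rw [hteq]; ext u
        simp only [Finset.mem_insert, Finset.mem_singleton]
        tauto
      have hne' : bag b ≠ bag a := fun h => h1 h.symm
      rcases hcol hAab.symm hne' with hE | hR
      · right; right
        have himg2 : t.image bag = {bag a, bag b} := by
          rw [himg, ← h2]
          ext q
          simp only [Finset.mem_insert, Finset.mem_singleton]
          tauto
        rcases (Ne.lt_or_gt h1) with hlt | hlt
        · exact ⟨bag a, bag b, hlt, hE.symm, himg2⟩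
        · exact ⟨bag b, bag a, hlt, hE, by rw [himg2, Finset.pair_comm]⟩
      · exact absurd (star1 hteq' hbc (Ne.symm hac) (Ne.symm hab) h2 (Or.inr hR)) hns
    · by_cases h3 : bag a = bag c
      · have hteq' : t = {a, c, b} := by
          rw [hteq]; ext u
          simp only [Finset.mem_insert, Finset.mem_singleton]
          tauto
        rcases hcol hAab h1 with hE | hR
        · right; right
          have himg2 : t.image bag = {bag a, bag b} := by
            rw [himg, ← h3]
            ext q
            simp only [Finset.mem_insert, Finset.mem_singleton]
            tauto
          rcases (Ne.lt_or_gt h1) with hlt | hlt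
          · exact ⟨bag a, bag b, hlt, hE, himg2⟩
          · exact ⟨bag b, bag a, hlt, hE.symm, by rw [himg2, Finset.pair_comm]⟩
        · exact absurd (star1 hteq' hac (Ne.symm hbc) hab h3 (Or.inr hR)) hns
      · have hE1 := hcol hAab h1
        have hE2 := hcol hAbc h2
        have hE3 := hcol hAac h3
        have mk2 : ((RH.Adj (bag a) (bag b) ∧ RH.Adj (bag b) (bag c)) ∨
            (RH.Adj (bag a) (bag b) ∧ RH.Adj (bag a) (bag c)) ∨
            (RH.Adj (bag b) (bag c) ∧ RH.Adj (bag a) (bag c))) → StarTriangle RH B t := by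
          intro d
          right
          exact ⟨bag a, bag b, bag c, h1, h2, h3, ⟨a, hat, hmem a⟩, ⟨b, hbt, hmem b⟩,
            ⟨c, hct, hmem c⟩, d⟩
        have one_red : ∀ {x y z : W}, RH.Adj x z → EH.Adj x y → EH.Adj y z →
            t.image bag = {x, y, z} →
            (∃ x' y' z', x' < z' ∧ RH.Adj x' z' ∧ EH.Adj x' y' ∧ EH.Adj y' z' ∧
              t.image bag = {x', y', z'}) := by
          intro x y z hr he1 he2 him
          rcases hr.ne.lt_or_gt with hlt | hlt
          · exact ⟨x, y, z, hlt, hr, he1, he2, him⟩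
          · refine ⟨z, y, x, hlt, hr.symm, he2.symm, he1.symm, ?_⟩
            rw [him]; ext q
            simp only [Finset.mem_insert, Finset.mem_singleton]
            tauto
        rcases hE1 with hE1 | hR1 <;> rcases hE2 with hE2 | hR2 <;> rcases hE3 with hE3 | hR3
        · left
          rw [himg]
          exact SimpleGraph.mem_cliqueFinset_iff.mpr
            (SimpleGraph.is3Clique_triple_iff.mpr ⟨hE1, hE3, hE2⟩)
        · exact Or.inr (Or.inl (one_red hR3 hE1 hE2 himg))
        · refine Or.inr (Or.inl (one_red hR2 hE1.symm hE3 ?_))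
          rw [himg]; ext q
          simp only [Finset.mem_insert, Finset.mem_singleton]
          tauto
        · exact absurd (mk2 (Or.inr (Or.inr ⟨hR2, hR3⟩))) hns
        · refine Or.inr (Or.inl (one_red hR1 hE3 hE2.symm ?_))
          rw [himg]; ext q
          simp only [Finset.mem_insert, Finset.mem_singleton]
          tauto
        · exact absurd (mk2 (Or.inr (Or.inl ⟨hR1, hR3⟩))) hns
        · exact absurd (mk2 (Or.inl ⟨hR1, hR2⟩)) hns
        · exact absurd (mk2 (Or.inl ⟨hR1, hR2⟩)) hns

end Aux

set_option maxHeartbeats 1000000 in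
/-- The triangle-counting invariant: for a graph `G` whose vertices are partitioned into
nonempty bags indexed by a trigraph `H = (W, E_H, R_H)`, with black edges of `H` meaning
complete bipartite adjacency between bags and non-adjacency meaning no edges between bags,
the number of triangles of `G` equals the number `t` of starred triangles plus
`Σ n(x)n(y)n(z)` over black triangles of `H`, plus `Σ e(x,z)·n(y)` over configurations with
`{x,y},{y,z}` black and `{x,z}` red, plus `Σ (n(x)m(y) + m(x)n(y))` over black edges of `H`. -/
theorem triangle_counting_invariant {V W : Type*} [Fintype V] [Fintype W] [LinearOrder W]
    (G : SimpleGraph V) (EH RH : SimpleGraph W) (B : W → Finset V)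
    (hdisj : ∀ x y : W, ¬ (EH.Adj x y ∧ RH.Adj x y))
    (hne : ∀ x : W, (B x).Nonempty)
    (hpart : ∀ a : V, ∃! x : W, a ∈ B x)
    (hblack : ∀ x y : W, EH.Adj x y → ∀ a ∈ B x, ∀ b ∈ B y, G.Adj a b)
    (hnone : ∀ x y : W, x ≠ y → ¬ EH.Adj x y → ¬ RH.Adj x y →
      ∀ a ∈ B x, ∀ b ∈ B y, ¬ G.Adj a b) :
    (G.cliqueFinset 3).card
      = ((G.cliqueFinset 3).filter (StarTriangle RH B)).card
        + ∑ s ∈ EH.cliqueFinset 3, ∏ x ∈ s, (B x).card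
        + ∑ y : W, ∑ x : W, ∑ z : W,
            (if x < z ∧ RH.Adj x z ∧ EH.Adj x y ∧ EH.Adj y z then
              edgesBetween G (B x) (B z) * (B y).card else 0)
        + ∑ x : W, ∑ y : W,
            (if x < y ∧ EH.Adj x y then
              (B x).card * edgesInside G (B y) + edgesInside G (B x) * (B y).card else 0) := by
  choose bag hmem huniq using hpart
  have hsum2 : ∑ p ∈ (Finset.univ.filter (fun p : W × W × W => p.2.1 < p.2.2 ∧ RH.Adj p.2.1 p.2.2 ∧ EH.Adj p.2.1 p.1 ∧ EH.Adj p.1 p.2.2)), edgesBetween G (B p.2.1) (B p.2.2) * (B p.1).card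
      = ∑ y : W, ∑ x : W, ∑ z : W,
          (if x < z ∧ RH.Adj x z ∧ EH.Adj x y ∧ EH.Adj y z then
            edgesBetween G (B x) (B z) * (B y).card else 0) := by
    rw [Finset.sum_filter, Fintype.sum_prod_type]
    refine Finset.sum_congr rfl fun y _ => ?_
    rw [Fintype.sum_prod_type]
  have hsum3 : ∑ p ∈ (Finset.univ.filter (fun p : W × W => p.1 < p.2 ∧ EH.Adj p.1 p.2)), ((B p.1).card * edgesInside G (B p.2)
        + edgesInside G (B p.1) * (B p.2).card)
      = ∑ x : W, ∑ y : W,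
          (if x < y ∧ EH.Adj x y then
            (B x).card * edgesInside G (B y) + edgesInside G (B x) * (B y).card else 0) := by
    rw [Finset.sum_filter, Fintype.sum_prod_type]
  have hfib : ((G.cliqueFinset 3).filter (fun t => ¬ StarTriangle RH B t)).card
      = ∑ s ∈ ((EH.cliqueFinset 3) ∪ ((Finset.univ.filter (fun p : W × W × W => p.2.1 < p.2.2 ∧ RH.Adj p.2.1 p.2.2 ∧ EH.Adj p.2.1 p.1 ∧ EH.Adj p.1 p.2.2)).image (fun p => ({p.2.1, p.1, p.2.2} : Finset W)))) ∪ ((Finset.univ.filter (fun p : W × W => p.1 < p.2 ∧ EH.Adj p.1 p.2)).image (fun p => ({p.1, p.2} : Finset W))),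
      (((G.cliqueFinset 3).filter (fun t => ¬ StarTriangle RH B t)).filter
        (fun t => t.image bag = s)).card := by
    apply Finset.card_eq_sum_card_fiberwise
    intro t htmem
    obtain ⟨ht, hns⟩ := Finset.mem_filter.mp htmem
    rcases classify hmem huniq hdisj hnone ht hns with h |
      ⟨x, y, z, hlt, hr, he1, he2, him⟩ | ⟨x, y, hlt, he, him⟩
    · exact Finset.mem_union_left _ (Finset.mem_union_left _ h)
    · refine Finset.mem_union_left _ (Finset.mem_union_right _ ?_)
      refine Finset.mem_image.mpr ⟨(y, x, z), ?_, him.symm⟩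
      simp only [Finset.mem_filter, Finset.mem_univ, true_and]
      exact ⟨hlt, hr, he1, he2⟩
    · refine Finset.mem_union_right _ ?_
      refine Finset.mem_image.mpr ⟨(x, y), ?_, him.symm⟩
      simp only [Finset.mem_filter, Finset.mem_univ, true_and]
      exact ⟨hlt, he⟩
  have hNfib : ∀ s ∈ ((EH.cliqueFinset 3) ∪ ((Finset.univ.filter (fun p : W × W × W => p.2.1 < p.2.2 ∧ RH.Adj p.2.1 p.2.2 ∧ EH.Adj p.2.1 p.1 ∧ EH.Adj p.1 p.2.2)).image (fun p => ({p.2.1, p.1, p.2.2} : Finset W)))) ∪ ((Finset.univ.filter (fun p : W × W => p.1 < p.2 ∧ EH.Adj p.1 p.2)).image (fun p => ({p.1, p.2} : Finset W))),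
      (((G.cliqueFinset 3).filter (fun t => ¬ StarTriangle RH B t)).filter
          (fun t => t.image bag = s))
        = (G.cliqueFinset 3).filter (fun t => t.image bag = s) := by
    intro s hs
    rw [Finset.filter_filter]
    apply Finset.filter_congr
    intro t ht
    constructor
    · exact fun h => h.2
    · intro h
      refine ⟨?_, h⟩
      rcases Finset.mem_union.mp hs with hs' | hs'
      · rcases Finset.mem_union.mp hs' with hs1 | hs2
        · exact notStar_of_blackTri hmem huniq hdisj ht (h ▸ hs1)
        · obtain ⟨p, hp, hps⟩ := Finset.mem_image.mp hs2
          simp only [Finset.mem_filter, Finset.mem_univ, true_and] at hp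
          exact notStar_of_oneRed hmem huniq hdisj ht (by rw [h]; exact hps.symm)
            hp.2.1 hp.2.2.1 hp.2.2.2
      · obtain ⟨p, hp, hps⟩ := Finset.mem_image.mp hs'
        simp only [Finset.mem_filter, Finset.mem_univ, true_and] at hp
        exact notStar_of_pair hmem huniq hdisj ht (by rw [h]; exact hps.symm) hp.2
  have hd12 : Disjoint (EH.cliqueFinset 3) ((Finset.univ.filter (fun p : W × W × W => p.2.1 < p.2.2 ∧ RH.Adj p.2.1 p.2.2 ∧ EH.Adj p.2.1 p.1 ∧ EH.Adj p.1 p.2.2)).image (fun p => ({p.2.1, p.1, p.2.2} : Finset W))) := by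
    rw [Finset.disjoint_left]
    intro s hs1 hs2
    obtain ⟨p, hp, hps⟩ := Finset.mem_image.mp hs2
    simp only [Finset.mem_filter, Finset.mem_univ, true_and] at hp
    obtain ⟨hlt, hr, he1, he2⟩ := hp
    have hc := SimpleGraph.mem_cliqueFinset_iff.mp hs1
    have hx : p.2.1 ∈ s := by rw [← hps]; simp
    have hz : p.2.2 ∈ s := by rw [← hps]; simp
    exact hdisj _ _ ⟨hc.isClique (Finset.mem_coe.mpr hx) (Finset.mem_coe.mpr hz) hlt.ne, hr⟩
  have hd3 : Disjoint ((EH.cliqueFinset 3) ∪ ((Finset.univ.filter (fun p : W × W × W => p.2.1 < p.2.2 ∧ RH.Adj p.2.1 p.2.2 ∧ EH.Adj p.2.1 p.1 ∧ EH.Adj p.1 p.2.2)).image (fun p => ({p.2.1, p.1, p.2.2} : Finset W)))) ((Finset.univ.filter (fun p : W × W => p.1 < p.2 ∧ EH.Adj p.1 p.2)).image (fun p => ({p.1, p.2} : Finset W))) := by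
    rw [Finset.disjoint_left]
    intro s hs hs3
    obtain ⟨p, hp, hps⟩ := Finset.mem_image.mp hs3
    simp only [Finset.mem_filter, Finset.mem_univ, true_and] at hp
    have hcard2 : s.card = 2 := by rw [← hps]; exact Finset.card_pair hp.1.ne
    rcases Finset.mem_union.mp hs with hs1 | hs2
    · have h3 := (SimpleGraph.mem_cliqueFinset_iff.mp hs1).card_eq
      omega
    · obtain ⟨q, hq, hqs⟩ := Finset.mem_image.mp hs2
      simp only [Finset.mem_filter, Finset.mem_univ, true_and] at hq
      obtain ⟨hlt, hr, he1, he2⟩ := hq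
      have h3 : s.card = 3 := by
        rw [← hqs]
        exact card_triple he1.ne hlt.ne he2.ne
      omega
  have hfib2 : ((G.cliqueFinset 3).filter (fun t => ¬ StarTriangle RH B t)).card
      = ∑ s ∈ (EH.cliqueFinset 3), ((G.cliqueFinset 3).filter (fun t => t.image bag = s)).card
        + ∑ s ∈ ((Finset.univ.filter (fun p : W × W × W => p.2.1 < p.2.2 ∧ RH.Adj p.2.1 p.2.2 ∧ EH.Adj p.2.1 p.1 ∧ EH.Adj p.1 p.2.2)).image (fun p => ({p.2.1, p.1, p.2.2} : Finset W))), ((G.cliqueFinset 3).filter (fun t => t.image bag = s)).card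
        + ∑ s ∈ ((Finset.univ.filter (fun p : W × W => p.1 < p.2 ∧ EH.Adj p.1 p.2)).image (fun p => ({p.1, p.2} : Finset W))), ((G.cliqueFinset 3).filter (fun t => t.image bag = s)).card := by
    rw [hfib, Finset.sum_congr rfl (fun s hs => by rw [hNfib s hs]),
      Finset.sum_union hd3, Finset.sum_union hd12]
  have hpart1 : ∑ s ∈ (EH.cliqueFinset 3), ((G.cliqueFinset 3).filter (fun t => t.image bag = s)).card
      = ∑ s ∈ (EH.cliqueFinset 3), ∏ x ∈ s, (B x).card := by
    refine Finset.sum_congr rfl fun s hs => ?_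
    obtain ⟨x, y, z, hxy, hxz, hyz, rfl⟩ :=
      SimpleGraph.is3Clique_iff.mp (SimpleGraph.mem_cliqueFinset_iff.mp hs)
    rw [countFiber3 hmem huniq hblack hxy hxz hyz,
      Finset.prod_insert (by simp [hxy.ne, hxz.ne]),
      Finset.prod_insert (by simp [hyz.ne]), Finset.prod_singleton]
  have hpart2 : ∑ s ∈ ((Finset.univ.filter (fun p : W × W × W => p.2.1 < p.2.2 ∧ RH.Adj p.2.1 p.2.2 ∧ EH.Adj p.2.1 p.1 ∧ EH.Adj p.1 p.2.2)).image (fun p => ({p.2.1, p.1, p.2.2} : Finset W))), ((G.cliqueFinset 3).filter (fun t => t.image bag = s)).card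
      = ∑ p ∈ (Finset.univ.filter (fun p : W × W × W => p.2.1 < p.2.2 ∧ RH.Adj p.2.1 p.2.2 ∧ EH.Adj p.2.1 p.1 ∧ EH.Adj p.1 p.2.2)), edgesBetween G (B p.2.1) (B p.2.2) * (B p.1).card := by
    have hinj : ∀ p ∈ (Finset.univ.filter (fun p : W × W × W => p.2.1 < p.2.2 ∧ RH.Adj p.2.1 p.2.2 ∧ EH.Adj p.2.1 p.1 ∧ EH.Adj p.1 p.2.2)), ∀ q ∈ (Finset.univ.filter (fun p : W × W × W => p.2.1 < p.2.2 ∧ RH.Adj p.2.1 p.2.2 ∧ EH.Adj p.2.1 p.1 ∧ EH.Adj p.1 p.2.2)),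
        ({p.2.1, p.1, p.2.2} : Finset W) = {q.2.1, q.1, q.2.2} → p = q := by
      rintro ⟨y, x, z⟩ hp ⟨y', x', z'⟩ hq heq
      simp only [Finset.mem_filter, Finset.mem_univ, true_and] at hp hq
      obtain ⟨hlt, hr, he1, he2⟩ := hp
      obtain ⟨hlt', hr', he1', he2'⟩ := hq
      have hx' : x' ∈ ({x, y, z} : Finset W) := by rw [heq]; simp
      have hy' : y' ∈ ({x, y, z} : Finset W) := by rw [heq]; simp
      have hz' : z' ∈ ({x, y, z} : Finset W) := by rw [heq]; simp
      rcases red_pair_unique hdisj he1 he2 hx' hz' hr' with ⟨e1, e2⟩ | ⟨e1, e2⟩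
      · have hy'' : y' = y := by
          simp only [Finset.mem_insert, Finset.mem_singleton] at hy'
          rcases hy' with h | h | h
          · exact absurd (h.trans e1.symm).symm he1'.ne
          · exact h
          · exact absurd (h.trans e2.symm) he2'.ne
        simp only [Prod.mk.injEq]
        exact ⟨hy''.symm, e1.symm, e2.symm⟩
      · rw [e1, e2] at hlt'
        exact absurd hlt' (not_lt.mpr hlt.le)
    rw [Finset.sum_image hinj]
    refine Finset.sum_congr rfl fun p hp => ?_
    simp only [Finset.mem_filter, Finset.mem_univ, true_and] at hp
    exact countFiber2 hmem huniq hblack hp.1.ne hp.2.2.1 hp.2.2.2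
  have hpart3 : ∑ s ∈ ((Finset.univ.filter (fun p : W × W => p.1 < p.2 ∧ EH.Adj p.1 p.2)).image (fun p => ({p.1, p.2} : Finset W))), ((G.cliqueFinset 3).filter (fun t => t.image bag = s)).card
      = ∑ p ∈ (Finset.univ.filter (fun p : W × W => p.1 < p.2 ∧ EH.Adj p.1 p.2)), ((B p.1).card * edgesInside G (B p.2)
          + edgesInside G (B p.1) * (B p.2).card) := by
    have hinj : ∀ p ∈ (Finset.univ.filter (fun p : W × W => p.1 < p.2 ∧ EH.Adj p.1 p.2)), ∀ q ∈ (Finset.univ.filter (fun p : W × W => p.1 < p.2 ∧ EH.Adj p.1 p.2)),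
        ({p.1, p.2} : Finset W) = {q.1, q.2} → p = q := by
      rintro ⟨x, y⟩ hp ⟨x', y'⟩ hq heq
      simp only [Finset.mem_filter, Finset.mem_univ, true_and] at hp hq
      have hx' : x' ∈ ({x, y} : Finset W) := by rw [heq]; simp
      have hy' : y' ∈ ({x, y} : Finset W) := by rw [heq]; simp
      simp only [Finset.mem_insert, Finset.mem_singleton] at hx' hy'
      simp only [Prod.mk.injEq]
      rcases hx' with rfl | rfl <;> rcases hy' with rfl | rfl
      · exact absurd hq.1 (lt_irrefl _)
      · exact ⟨rfl, rfl⟩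
      · exact absurd (hp.1.trans hq.1) (lt_irrefl _)
      · exact absurd hq.1 (lt_irrefl _)
    rw [Finset.sum_image hinj]
    refine Finset.sum_congr rfl fun p hp => ?_
    simp only [Finset.mem_filter, Finset.mem_univ, true_and] at hp
    exact countFiberPair hmem huniq hblack hp.2
  have hstar : (G.cliqueFinset 3).card
      = ((G.cliqueFinset 3).filter (StarTriangle RH B)).card
        + ((G.cliqueFinset 3).filter (fun t => ¬ StarTriangle RH B t)).card :=
    (Finset.card_filter_add_card_filter_not _).symm
  rw [hstar, hfib2, hpart1, hpart2, hpart3, hsum2, hsum3]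
  ring
end

section
/- In a contraction sequence G = G_n, ..., G_1 = K_1 of a graph G, consider a fixed triangle T of G and classify its configuration in each G_k by the number of distinct bags meeting T and the colors of the connecting edges (cases (i)–(vii) as in the classification observation). Then as k decreases, once T is in one of the cases (iii), (iv), (vi), (vii) (at most one black connecting edge among three bags, red edge between two bags, or a single bag), it remains in one of these cases in all subsequent trigraphs G_{k'}, k' < k. -/
/-!
Contracting `u, v` into `u` acts on vertices by `v ↦ u`. Under this map every bag lands in the bag
of its image, an edge whose ends stay apart remains an edge, and a red edge remains red: an old red
edge `vw` is not black (black and red edges stay disjoint along a contraction sequence), so `uw`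
cannot become black. The starred cases are exactly the configurations with bags `x, y, z` of the
triangle, not necessarily distinct, such that `yz` and `xz` are red and `xy` is an edge wherever
the bags differ, and such a triple is pushed forward by any map with the above properties.
-/

attribute [local instance] Classical.propDecidable

/-- A trigraph on a current vertex set `S ⊆ V` (black edges `E`, red edges `R`) together with,
for each vertex `x`, its bag `B x`: the set of original vertices contracted into `x`. -/
structure Config (V : Type*) where
  S : Finset V
  E : SimpleGraph V
  R : SimpleGraph V
  B : V → Finset V

/-- Contraction of `u` and `v` into the vertex `u` (playing the role of the new vertex `w`):
`v` is removed; a vertex gets a black edge to the new vertex iff it was black-adjacent to both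
`u` and `v`, no edge iff adjacent to neither, and a red edge otherwise; other edges are
unchanged.  The bag of the new vertex is the union of the two old bags. -/
noncomputable def Config.contract {V : Type*} (C : Config V) (u v : V) : Config V where
  S := C.S.erase v
  E := SimpleGraph.fromRel fun a b =>
    if a = u then C.E.Adj u b ∧ C.E.Adj v b
    else if b = u then C.E.Adj u a ∧ C.E.Adj v a
    else C.E.Adj a b
  R := SimpleGraph.fromRel fun a b =>
    if a = u then ¬(C.E.Adj u b ∧ C.E.Adj v b) ∧
      (C.E.Adj u b ∨ C.R.Adj u b ∨ C.E.Adj v b ∨ C.R.Adj v b)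
    else if b = u then ¬(C.E.Adj u a ∧ C.E.Adj v a) ∧
      (C.E.Adj u a ∨ C.R.Adj u a ∨ C.E.Adj v a ∨ C.R.Adj v a)
    else C.R.Adj a b
  B := Function.update C.B u (C.B u ∪ C.B v)

/-- `Reaches G C` means the trigraph-with-bags `C` appears in some contraction sequence of the
graph `G`: it is obtained from `G` (with no red edges and singleton bags) by a sequence of
contractions. -/
inductive Reaches {V : Type*} [Fintype V] (G : SimpleGraph V) : Config V → Prop
  | init : Reaches G ⟨Finset.univ, G, ⊥, fun x => {x}⟩
  | step (C : Config V) (u v : V) (hu : u ∈ C.S) (hv : v ∈ C.S) (huv : u ≠ v)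
      (h : Reaches G C) : Reaches G (C.contract u v)

/-- Case (i): the three triangle vertices lie in three distinct bags whose three connecting
edges are all black. -/
def Case1 {V : Type*} (C : Config V) (a b c : V) : Prop :=
  ∃ x ∈ C.S, ∃ y ∈ C.S, ∃ z ∈ C.S, x ≠ y ∧ y ≠ z ∧ x ≠ z ∧
    a ∈ C.B x ∧ b ∈ C.B y ∧ c ∈ C.B z ∧
    C.E.Adj x y ∧ C.E.Adj y z ∧ C.E.Adj x z

/-- Case (ii): three distinct bags, exactly two black connecting edges and one red. -/
def Case2 {V : Type*} (C : Config V) (a b c : V) : Prop :=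
  ∃ x ∈ C.S, ∃ y ∈ C.S, ∃ z ∈ C.S, x ≠ y ∧ y ≠ z ∧ x ≠ z ∧
    a ∈ C.B x ∧ b ∈ C.B y ∧ c ∈ C.B z ∧
    C.E.Adj x y ∧ C.E.Adj y z ∧ C.R.Adj x z

/-- Case (iii): three distinct bags, exactly one black connecting edge and two red. -/
def Case3 {V : Type*} (C : Config V) (a b c : V) : Prop :=
  ∃ x ∈ C.S, ∃ y ∈ C.S, ∃ z ∈ C.S, x ≠ y ∧ y ≠ z ∧ x ≠ z ∧
    a ∈ C.B x ∧ b ∈ C.B y ∧ c ∈ C.B z ∧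
    C.E.Adj x y ∧ C.R.Adj y z ∧ C.R.Adj x z

/-- Case (iv): three distinct bags, all three connecting edges red. -/
def Case4 {V : Type*} (C : Config V) (a b c : V) : Prop :=
  ∃ x ∈ C.S, ∃ y ∈ C.S, ∃ z ∈ C.S, x ≠ y ∧ y ≠ z ∧ x ≠ z ∧
    a ∈ C.B x ∧ b ∈ C.B y ∧ c ∈ C.B z ∧
    C.R.Adj x y ∧ C.R.Adj y z ∧ C.R.Adj x z

/-- Case (v): one triangle vertex in a bag `G(x)`, the other two in a bag `G(y)`, with
`{x,y}` a black edge. -/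
def Case5 {V : Type*} (C : Config V) (a b c : V) : Prop :=
  ∃ x ∈ C.S, ∃ y ∈ C.S, x ≠ y ∧ C.E.Adj x y ∧
    ((a ∈ C.B x ∧ b ∈ C.B y ∧ c ∈ C.B y) ∨
     (b ∈ C.B x ∧ a ∈ C.B y ∧ c ∈ C.B y) ∨
     (c ∈ C.B x ∧ a ∈ C.B y ∧ b ∈ C.B y))

/-- Case (vi): one triangle vertex in a bag `G(x)`, the other two in a bag `G(y)`, with
`{x,y}` a red edge. -/
def Case6 {V : Type*} (C : Config V) (a b c : V) : Prop :=
  ∃ x ∈ C.S, ∃ y ∈ C.S, x ≠ y ∧ C.R.Adj x y ∧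
    ((a ∈ C.B x ∧ b ∈ C.B y ∧ c ∈ C.B y) ∨
     (b ∈ C.B x ∧ a ∈ C.B y ∧ c ∈ C.B y) ∨
     (c ∈ C.B x ∧ a ∈ C.B y ∧ b ∈ C.B y))

/-- Case (vii): all three triangle vertices lie in a single bag. -/
def Case7 {V : Type*} (C : Config V) (a b c : V) : Prop :=
  ∃ x ∈ C.S, a ∈ C.B x ∧ b ∈ C.B x ∧ c ∈ C.B x

namespace Config

variable {V : Type*}

structure IsContractionMap (C D : Config V) (f : V → V) : Prop where
  mapsTo : ∀ x ∈ C.S, f x ∈ D.S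
  bag_subset : ∀ x, C.B x ⊆ D.B (f x)
  map_black : ∀ ⦃x y⦄, C.E.Adj x y → f x ≠ f y → D.E.Adj (f x) (f y) ∨ D.R.Adj (f x) (f y)
  map_red : ∀ ⦃x y⦄, C.R.Adj x y → f x ≠ f y → D.R.Adj (f x) (f y)

def StarCase (C : Config V) (a b c : V) : Prop :=
  Case3 C a b c ∨ Case4 C a b c ∨ Case6 C a b c ∨ Case7 C a b c

structure IsStarTriple (C : Config V) (a b c x y z : V) : Prop where
  mem_x : x ∈ C.S
  mem_y : y ∈ C.S
  mem_z : z ∈ C.S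
  mem_bag_x : a ∈ C.B x
  mem_bag_y : b ∈ C.B y
  mem_bag_z : c ∈ C.B z
  adj_xy : x ≠ y → C.E.Adj x y ∨ C.R.Adj x y
  red_yz : y ≠ z → C.R.Adj y z
  red_xz : x ≠ z → C.R.Adj x z

variable {C : Config V} {a b c : V}

theorem exists_isStarTriple_of_starCase (h : StarCase C a b c) :
    ∃ x y z, IsStarTriple C a b c x y z := by
  rcases h with ⟨x, hx, y, hy, z, hz, -, -, -, ha, hb, hc, hxy, hyz, hxz⟩ |
      ⟨x, hx, y, hy, z, hz, -, -, -, ha, hb, hc, hxy, hyz, hxz⟩ |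
      ⟨x, hx, y, hy, -, hxy, ⟨ha, hb, hc⟩ | ⟨hb, ha, hc⟩ | ⟨hc, ha, hb⟩⟩ | ⟨x, hx, ha, hb, hc⟩
  · exact ⟨x, y, z, hx, hy, hz, ha, hb, hc, fun _ => .inl hxy, fun _ => hyz, fun _ => hxz⟩
  · exact ⟨x, y, z, hx, hy, hz, ha, hb, hc, fun _ => .inr hxy, fun _ => hyz, fun _ => hxz⟩
  · exact ⟨x, y, y, hx, hy, hy, ha, hb, hc, fun _ => .inr hxy, absurd rfl, fun _ => hxy⟩
  · exact ⟨y, x, y, hy, hx, hy, ha, hb, hc, fun _ => .inr hxy.symm, fun _ => hxy, absurd rfl⟩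
  · exact ⟨y, y, x, hy, hy, hx, ha, hb, hc, absurd rfl, fun _ => hxy.symm, fun _ => hxy.symm⟩
  · exact ⟨x, x, x, hx, hx, hx, ha, hb, hc, absurd rfl, absurd rfl, absurd rfl⟩

theorem IsStarTriple.starCase {x y z : V} (h : IsStarTriple C a b c x y z) :
    StarCase C a b c := by
  obtain ⟨hx, hy, hz, ha, hb, hc, hxy, hyz, hxz⟩ := h
  by_cases exy : x = y
  · subst exy
    by_cases exz : x = z
    · subst exz
      exact .inr (.inr (.inr ⟨x, hx, ha, hb, hc⟩))
    · exact .inr (.inr (.inl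
        ⟨z, hz, x, hx, Ne.symm exz, (hxz exz).symm, .inr (.inr ⟨hc, ha, hb⟩)⟩))
  by_cases eyz : y = z
  · subst eyz
    exact .inr (.inr (.inl ⟨x, hx, y, hy, exy, hxz exy, .inl ⟨ha, hb, hc⟩⟩))
  by_cases exz : x = z
  · subst exz
    exact .inr (.inr (.inl ⟨y, hy, x, hx, Ne.symm exy, hyz eyz, .inr (.inl ⟨hb, ha, hc⟩)⟩))
  rcases hxy exy with hxy | hxy
  · exact .inl ⟨x, hx, y, hy, z, hz, exy, eyz, exz, ha, hb, hc, hxy, hyz eyz, hxz exz⟩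
  · exact .inr (.inl ⟨x, hx, y, hy, z, hz, exy, eyz, exz, ha, hb, hc, hxy, hyz eyz, hxz exz⟩)

theorem IsStarTriple.map {D : Config V} {f : V → V} (hf : IsContractionMap C D f) {x y z : V}
    (h : IsStarTriple C a b c x y z) : IsStarTriple D a b c (f x) (f y) (f z) where
  mem_x := hf.mapsTo x h.mem_x
  mem_y := hf.mapsTo y h.mem_y
  mem_z := hf.mapsTo z h.mem_z
  mem_bag_x := hf.bag_subset x h.mem_bag_x
  mem_bag_y := hf.bag_subset y h.mem_bag_y
  mem_bag_z := hf.bag_subset z h.mem_bag_z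
  adj_xy hne :=
    (h.adj_xy (ne_of_apply_ne f hne)).elim (hf.map_black · hne) (.inr <| hf.map_red · hne)
  red_yz hne := hf.map_red (h.red_yz (ne_of_apply_ne f hne)) hne
  red_xz hne := hf.map_red (h.red_xz (ne_of_apply_ne f hne)) hne

theorem StarCase.map {D : Config V} {f : V → V} (hf : IsContractionMap C D f)
    (h : StarCase C a b c) : StarCase D a b c :=
  let ⟨_, _, _, hxyz⟩ := exists_isStarTriple_of_starCase h
  (hxyz.map hf).starCase

section Contract

variable {u v : V}

theorem contract_E_adj_of_ne {x y : V} (hx : x ≠ u) (hy : y ≠ u) :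
    (C.contract u v).E.Adj x y ↔ C.E.Adj x y := by
  simp only [contract, SimpleGraph.fromRel_adj, if_neg hx, if_neg hy]
  exact ⟨fun ⟨_, h⟩ => h.elim id .symm, fun h => ⟨h.ne, .inl h⟩⟩

theorem contract_R_adj_of_ne {x y : V} (hx : x ≠ u) (hy : y ≠ u) :
    (C.contract u v).R.Adj x y ↔ C.R.Adj x y := by
  simp only [contract, SimpleGraph.fromRel_adj, if_neg hx, if_neg hy]
  exact ⟨fun ⟨_, h⟩ => h.elim id .symm, fun h => ⟨h.ne, .inl h⟩⟩

theorem contract_E_adj_left {y : V} (hy : y ≠ u) :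
    (C.contract u v).E.Adj u y ↔ C.E.Adj u y ∧ C.E.Adj v y := by
  simp only [contract, SimpleGraph.fromRel_adj, if_neg hy]
  exact ⟨fun ⟨_, h⟩ => h.elim id id, fun h => ⟨hy.symm, .inl h⟩⟩

theorem contract_R_adj_left {y : V} (hy : y ≠ u) :
    (C.contract u v).R.Adj u y ↔ ¬(C.E.Adj u y ∧ C.E.Adj v y) ∧
      (C.E.Adj u y ∨ C.R.Adj u y ∨ C.E.Adj v y ∨ C.R.Adj v y) := by
  simp only [contract, SimpleGraph.fromRel_adj, if_neg hy]
  exact ⟨fun ⟨_, h⟩ => h.elim id id, fun h => ⟨hy.symm, .inl h⟩⟩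

theorem disjoint_contract (hC : Disjoint C.E C.R) :
    Disjoint (C.contract u v).E (C.contract u v).R := by
  rw [SimpleGraph.disjoint_left] at hC ⊢
  suffices key : ∀ x y, x ≠ u → (C.contract u v).E.Adj x y → ¬(C.contract u v).R.Adj x y by
    intro x y hE hR
    by_cases hx : x = u
    · exact key y x (hx ▸ hE.ne.symm) hE.symm hR.symm
    · exact key x y hx hE hR
  intro x y hx hE hR
  by_cases hy : y = u
  · subst hy
    exact ((contract_R_adj_left hx).1 hR.symm).1 ((contract_E_adj_left hx).1 hE.symm)
  · exact hC x y ((contract_E_adj_of_ne hx hy).1 hE) ((contract_R_adj_of_ne hx hy).1 hR)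

noncomputable def contractMap (u v : V) : V → V := Function.update id v u

theorem contractMap_eq_or_eq (x : V) : (x ≠ u ∧ x ≠ v ∧ contractMap u v x = x) ∨
    ((x = u ∨ x = v) ∧ contractMap u v x = u) := by
  by_cases hv : x = v
  · exact .inr ⟨.inr hv, hv ▸ Function.update_self ..⟩
  by_cases hu : x = u
  · exact .inr ⟨.inl hu, hu ▸ Function.update_of_ne hv ..⟩
  · exact .inl ⟨hu, hv, Function.update_of_ne hv ..⟩

theorem contractMap_of_ne {x : V} (h : x ≠ v) : contractMap u v x = x :=
  Function.update_of_ne h ..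

theorem contractMap_induction {P : V → V → Prop} (hP : ∀ x y, P x y → P y x)
    (hright : ∀ x y, y ≠ u → y ≠ v → P x y) {x y : V}
    (hxy : contractMap u v x ≠ contractMap u v y) : P x y := by
  rcases contractMap_eq_or_eq (u := u) (v := v) y with ⟨hyu, hyv, -⟩ | ⟨-, hy⟩
  · exact hright x y hyu hyv
  rcases contractMap_eq_or_eq (u := u) (v := v) x with ⟨hxu, hxv, -⟩ | ⟨-, hx⟩
  · exact hP y x (hright y x hxu hxv)
  · exact absurd (hx.trans hy.symm) hxy

theorem contract_R_adj_contractMap_left (hC : Disjoint C.E C.R) {x y : V} (h : C.R.Adj x y)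
    (hyu : y ≠ u) : (C.contract u v).R.Adj (contractMap u v x) y := by
  rcases contractMap_eq_or_eq (u := u) (v := v) x with ⟨hxu, -, hx⟩ | ⟨hxuv, hx⟩
  · rw [hx, contract_R_adj_of_ne hxu hyu]
    exact h
  · have hxy : ¬C.E.Adj x y := SimpleGraph.disjoint_left.1 hC.symm x y h
    rw [hx, contract_R_adj_left hyu]
    rcases hxuv with rfl | rfl <;> tauto

theorem contract_adj_contractMap_left {x y : V} (h : C.E.Adj x y) (hyu : y ≠ u) :
    (C.contract u v).E.Adj (contractMap u v x) y ∨
      (C.contract u v).R.Adj (contractMap u v x) y := by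
  rcases contractMap_eq_or_eq (u := u) (v := v) x with ⟨hxu, -, hx⟩ | ⟨hxuv, hx⟩
  · rw [hx, contract_E_adj_of_ne hxu hyu]
    exact .inl h
  · rw [hx, contract_E_adj_left hyu, contract_R_adj_left hyu]
    rcases hxuv with rfl | rfl <;> tauto

theorem isContractionMap_contract (hC : Disjoint C.E C.R) (hu : u ∈ C.S) (huv : u ≠ v) :
    IsContractionMap C (C.contract u v) (contractMap u v) where
  mapsTo x hx := by
    rcases contractMap_eq_or_eq (u := u) (v := v) x with ⟨-, hxv, hx'⟩ | ⟨-, hx'⟩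
    · rw [hx']
      exact Finset.mem_erase.2 ⟨hxv, hx⟩
    · rw [hx']
      exact Finset.mem_erase.2 ⟨huv, hu⟩
  bag_subset x := by
    rcases contractMap_eq_or_eq (u := u) (v := v) x with ⟨hxu, -, hx⟩ | ⟨hxuv, hx⟩
    · simp only [contract, hx, Function.update_of_ne hxu, subset_refl]
    · simp only [contract, hx, Function.update_self]
      rcases hxuv with rfl | rfl
      exacts [Finset.subset_union_left, Finset.subset_union_right]
  map_black x y h hne := by
    refine contractMap_induction (P := fun x y => C.E.Adj x y →
        (C.contract u v).E.Adj (contractMap u v x) (contractMap u v y) ∨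
          (C.contract u v).R.Adj (contractMap u v x) (contractMap u v y))
      (fun _ _ h' h => (h' h.symm).imp .symm .symm) (fun x y hyu hyv h => ?_) hne h
    rw [contractMap_of_ne hyv]
    exact contract_adj_contractMap_left h hyu
  map_red x y h hne := by
    refine contractMap_induction (P := fun x y => C.R.Adj x y →
        (C.contract u v).R.Adj (contractMap u v x) (contractMap u v y))
      (fun _ _ h' h => (h' h.symm).symm) (fun x y hyu hyv h => ?_) hne h
    rw [contractMap_of_ne hyv]
    exact contract_R_adj_contractMap_left hC h hyu

end Contract

end Config

theorem Reaches.disjoint {V : Type*} [Fintype V] {G : SimpleGraph V} {C : Config V}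
    (h : Reaches G C) : Disjoint C.E C.R := by
  induction h with
  | init => exact disjoint_bot_right
  | step D u v _ _ _ _ ih => exact Config.disjoint_contract ih

theorem star_cases_closed_general {V : Type*} [Fintype V] (G : SimpleGraph V) (C : Config V)
    (h : Reaches G C) (u v : V) (hu : u ∈ C.S) (huv : u ≠ v)
    (a b c : V)
    (hstar : Case3 C a b c ∨ Case4 C a b c ∨ Case6 C a b c ∨ Case7 C a b c) :
    Case3 (C.contract u v) a b c ∨ Case4 (C.contract u v) a b c ∨
      Case6 (C.contract u v) a b c ∨ Case7 (C.contract u v) a b c :=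
  Config.StarCase.map (Config.isContractionMap_contract h.disjoint hu huv) hstar

/-- Once a triangle of `G` is in one of the starred cases (iii), (iv), (vi), (vii) in a
trigraph of a contraction sequence, it remains in one of these cases after any further
contraction step. -/
theorem star_cases_closed {V : Type*} [Fintype V] (G : SimpleGraph V) (C : Config V)
    (h : Reaches G C) (u v : V) (hu : u ∈ C.S) (hv : v ∈ C.S) (huv : u ≠ v)
    (a b c : V) (hab : G.Adj a b) (hbc : G.Adj b c) (hac : G.Adj a c)
    (hstar : Case3 C a b c ∨ Case4 C a b c ∨ Case6 C a b c ∨ Case7 C a b c) :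
    Case3 (C.contract u v) a b c ∨ Case4 (C.contract u v) a b c ∨
      Case6 (C.contract u v) a b c ∨ Case7 (C.contract u v) a b c :=
  star_cases_closed_general G C h u v hu huv a b c hstar
end
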